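/- arXiv:1610.06979 — 4 statements merged into one kernel-verified Lean document; each statement's English description precedes it below -/
import Mathlib

section
/- Let G = G[X,Y] be a connected bipartite graph on n vertices. Then ρ_D(G) ≥ 3n − 4 if n is even, and ρ_D(G) ≥ (5n − 8 + √(n² + 8))/2 if n is odd. -/
/-!
Since `x ⬝ᵥ Q_D x = ½ ∑_{u,v} d(u,v) (x_u + x_v)²`, the quadratic form of `Q_D` is monotone in
the distances. In a connected bipartite graph with parts of sizes `p` and `q`, distinct vertices
of the same part are at distance at least `2`, so `Q_D(G)` dominates, as a quadratic form, the
distance signless Laplacian of `K_{p,q}`. Testing it on the vector that is constant on each part,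
with values given by the Perron vector of the `2 × 2` quotient matrix, gives
`ρ_D(G) ≥ (5n - 8 + √(n² + 8(p - q)²)) / 2`; finally `(p - q)² ≥ 1` when `n` is odd.
-/

open SimpleGraph Finset

/-- The transmission of a vertex: sum of distances to all other vertices. -/
noncomputable def transmission {V : Type*} [Fintype V] (G : SimpleGraph V) (u : V) : ℕ :=
  ∑ v, G.dist u v

/-- The transmission σ(G): sum of distances over all unordered pairs. -/
noncomputable def transmissionOf {V : Type*} [Fintype V] (G : SimpleGraph V) : ℝ :=
  (1 / 2) * ∑ u, ∑ v, (G.dist u v : ℝ)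

/-- The distance signless Laplacian matrix Q_D(G) = Tr(G) + 𝒟(G). -/
noncomputable def distSignlessLaplacian {V : Type*} [Fintype V] [DecidableEq V]
    (G : SimpleGraph V) : Matrix V V ℝ :=
  fun u v => (if u = v then (transmission G u : ℝ) else 0) + (G.dist u v : ℝ)

/-- `ρ` is the distance signless Laplacian spectral radius of `G`,
i.e. the largest eigenvalue of `Q_D(G)`. -/
noncomputable def IsDistSLSpectralRadius {V : Type*} [Fintype V] [DecidableEq V]
    (G : SimpleGraph V) (ρ : ℝ) : Prop :=
  IsGreatest {μ : ℝ | Module.End.HasEigenvalue (Matrix.toLin' (distSignlessLaplacian G)) μ} ρ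

/-- Join of two graphs. -/
def joinGraph {α β : Type*} (G : SimpleGraph α) (H : SimpleGraph β) : SimpleGraph (α ⊕ β) :=
  SimpleGraph.fromRel (fun x y =>
    match x, y with
    | Sum.inl a, Sum.inl b => G.Adj a b
    | Sum.inr a, Sum.inr b => H.Adj a b
    | Sum.inl _, Sum.inr _ => True
    | Sum.inr _, Sum.inl _ => False)

/-- The graph H_{t,n-t}. -/
def HGraph (n t : ℕ) : SimpleGraph (Fin n ⊕ Fin n) :=
  SimpleGraph.fromRel (fun x y =>
    match x, y with
    | Sum.inl i, Sum.inr j => (j : ℕ) < n - t ∨ (i : ℕ) < t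
    | _, _ => False)

/-- Hamilton-connected. -/
def IsHamiltonianConnected {V : Type*} [DecidableEq V] (G : SimpleGraph V) : Prop :=
  ∀ u v : V, u ≠ v → ∃ p : G.Walk u v, p.IsHamiltonian

/-- Traceable from every vertex. -/
def TraceableFromEveryVertex {V : Type*} [DecidableEq V] (G : SimpleGraph V) : Prop :=
  ∀ u : V, ∃ v : V, ∃ p : G.Walk u v, p.IsHamiltonian

/-- K_{n-1} + e : complete graph on n-1 vertices with a pendant edge. -/
def KPlusPendant (n : ℕ) : SimpleGraph (Fin (n - 1) ⊕ Fin 1) :=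
  SimpleGraph.fromRel (fun x y =>
    match x, y with
    | Sum.inl a, Sum.inl b => a ≠ b
    | Sum.inl a, Sum.inr _ => (a : ℕ) = 0
    | _, _ => False)

open Matrix
open scoped MatrixOrder

theorem Matrix.IsHermitian.dotProduct_mulVec_le_of_hasEigenvalue_le {V : Type*} [Fintype V]
    [DecidableEq V] {A : Matrix V V ℝ} (hA : A.IsHermitian) {r : ℝ}
    (h : ∀ μ : ℝ, Module.End.HasEigenvalue (Matrix.toLin' A) μ → μ ≤ r) (x : V → ℝ) :
    x ⬝ᵥ (A *ᵥ x) ≤ r * (x ⬝ᵥ x) := by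
  have hle : A ≤ algebraMap ℝ _ r := by
    refine (le_algebraMap_iff_spectrum_le hA.isSelfAdjoint).2 fun μ hμ => h μ ?_
    rwa [Module.End.hasEigenvalue_iff_mem_spectrum, Matrix.spectrum_toLin']
  have hpsd := (Matrix.le_iff.1 hle).dotProduct_mulVec_nonneg x
  simp only [Algebra.algebraMap_eq_smul_one, sub_mulVec, smul_mulVec, one_mulVec,
    dotProduct_sub, dotProduct_smul, star_trivial, smul_eq_mul] at hpsd
  linarith

theorem Fintype.sum_comp_bool {ι R : Type*} [Fintype ι] [NonAssocSemiring R] (c : ι → Bool)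
    (f : Bool → R) : ∑ i, f (c i) = #{i | c i = true} * f true + #{i | c i = false} * f false := by
  simp [← Finset.sum_fiberwise' univ c f, nsmul_eq_mul]

theorem SimpleGraph.Connected.two_le_dist_of_coloring_eq {V : Type*} {G : SimpleGraph V}
    (hG : G.Connected) (c : G.Coloring Bool) {u v : V} (huv : u ≠ v) (hc : c u = c v) :
    2 ≤ G.dist u v := by
  obtain ⟨p, hp⟩ := hG.exists_walk_length_eq_dist u v
  have heven : Even (G.dist u v) := hp ▸ (c.even_length_iff_congr p).2 (by rw [hc])
  have hpos := hG.pos_dist_of_ne huv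
  obtain ⟨k, hk⟩ := heven
  omega

section DistSignlessLaplacian

variable {V : Type*} [Fintype V] [DecidableEq V] {G : SimpleGraph V}

theorem distSignlessLaplacian_isHermitian (G : SimpleGraph V) :
    (distSignlessLaplacian G).IsHermitian :=
  IsHermitian.ext fun u v => by
    by_cases h : u = v
    · subst h; rfl
    · simp [distSignlessLaplacian, h, Ne.symm h, dist_comm]

theorem dotProduct_distSignlessLaplacian_mulVec (G : SimpleGraph V) (x : V → ℝ) :
    x ⬝ᵥ (distSignlessLaplacian G *ᵥ x) = (∑ u, ∑ v, (G.dist u v : ℝ) * (x u + x v) ^ 2) / 2 := by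
  have hform : x ⬝ᵥ (distSignlessLaplacian G *ᵥ x)
      = ∑ u, ∑ v, (G.dist u v : ℝ) * (x u ^ 2 + x u * x v) := by
    simp only [dotProduct, mulVec, distSignlessLaplacian, transmission, add_mul, ite_mul,
      zero_mul, sum_add_distrib, sum_ite_eq, mem_univ, if_true, Nat.cast_sum, sum_mul]
    refine sum_congr rfl fun u _ => ?_
    rw [mul_add, mul_sum, mul_sum, ← sum_add_distrib]
    exact sum_congr rfl fun v _ => by ring
  have hswap : ∑ u, ∑ v, (G.dist u v : ℝ) * (x v ^ 2 + x u * x v)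
      = ∑ u, ∑ v, (G.dist u v : ℝ) * (x u ^ 2 + x u * x v) := by
    rw [sum_comm]
    exact sum_congr rfl fun u _ => sum_congr rfl fun v _ => by rw [SimpleGraph.dist_comm]; ring
  rw [hform, eq_div_iff two_ne_zero, mul_two]
  nth_rewrite 2 [← hswap]
  simp only [← sum_add_distrib]
  exact sum_congr rfl fun u _ => sum_congr rfl fun v _ => by ring

theorem le_dotProduct_distSignlessLaplacian_mulVec_comp_coloring (hG : G.Connected)
    (c : G.Coloring Bool) {p q : ℝ} (hp : #{u | c u = true} = p) (hq : #{u | c u = false} = q)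
    (w : Bool → ℝ) :
    4 * p * (p - 1) * w true ^ 2 + p * q * (w true + w false) ^ 2 + 4 * q * (q - 1) * w false ^ 2
      ≤ (w ∘ c) ⬝ᵥ (distSignlessLaplacian G *ᵥ (w ∘ c)) := by
  have hsum₁ (f : Bool → ℝ) : ∑ u, f (c u) = p * f true + q * f false := by
    rw [Fintype.sum_comp_bool, hp, hq]
  have hsum₂ (F : Bool → Bool → ℝ) : ∑ u, ∑ v, F (c u) (c v)
      = p * (p * F true true + q * F true false) + q * (p * F false true + q * F false false) := by
    simp only [hsum₁ (F _)]
    exact hsum₁ fun i => p * F i true + q * F i false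
  have hdist (u v : V) :
      ((if c u = c v then 2 else 1 : ℝ) - if u = v then 2 else 0) ≤ G.dist u v := by
    by_cases huv : u = v
    · simp [huv]
    by_cases hc : c u = c v
    · simpa [huv, hc] using hG.two_le_dist_of_coloring_eq c huv hc
    · simp only [huv, hc, if_false, sub_zero, Nat.one_le_cast]
      exact hG.pos_dist_of_ne huv
  rw [dotProduct_distSignlessLaplacian_mulVec]
  calc _ = (∑ u, ∑ v, ((if c u = c v then 2 else 1 : ℝ) - if u = v then 2 else 0)
            * ((w ∘ c) u + (w ∘ c) v) ^ 2) / 2 := by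
        simp only [Function.comp_apply, sub_mul, sum_sub_distrib, ite_zero_mul, sum_ite_eq,
          mem_univ, if_true]
        rw [hsum₂ (fun i j => (if i = j then 2 else 1) * (w i + w j) ^ 2),
          hsum₁ (fun i => 2 * (w i + w i) ^ 2)]
        simp only [↓reduceIte, Bool.true_eq_false, Bool.false_eq_true]
        ring
    _ ≤ _ := by
        gcongr with u _ v _
        exact hdist u v

theorem distSignlessLaplacian_bipartite_bound_le (hG : G.Connected)
    (c : G.Coloring Bool) {p q : ℝ} (hp : #{u | c u = true} = p) (hq : #{u | c u = false} = q)
    {ρ : ℝ} (hρ : ∀ μ, Module.End.HasEigenvalue (toLin' (distSignlessLaplacian G)) μ → μ ≤ ρ) :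
    (5 * (p + q) - 8 + √((p + q) ^ 2 + 8 * (p - q) ^ 2)) / 2 ≤ ρ := by
  have hp0 : 0 ≤ p := hp ▸ Nat.cast_nonneg _
  have hq0 : 0 ≤ q := hq ▸ Nat.cast_nonneg _
  have hn : 1 ≤ p + q := by
    have := Fintype.sum_comp_bool c (fun _ => (1 : ℝ))
    simp only [sum_const, card_univ, nsmul_eq_mul, mul_one, hp, hq] at this
    rw [← this]
    exact_mod_cast Fintype.card_pos_iff.2 hG.nonempty
  set s := √((p + q) ^ 2 + 8 * (p - q) ^ 2)
  have hs2 : s ^ 2 = (p + q) ^ 2 + 8 * (p - q) ^ 2 := Real.sq_sqrt (by positivity)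
  have hs : p + q ≤ s := Real.le_sqrt_of_sq_le (by nlinarith)
  -- `w` is the Perron vector, for the eigenvalue `(5(p + q) - 8 + s) / 2`, of the quotient
  -- matrix `!![4p - 4 + q, q; p, 4q - 4 + p]` of the distance signless Laplacian of `K_{p,q}`
  let w : Bool → ℝ := fun i => cond i (3 * p - q + s) (3 * q - p + s)
  have hquot := le_dotProduct_distSignlessLaplacian_mulVec_comp_coloring hG c hp hq w
  have hray := (distSignlessLaplacian_isHermitian G).dotProduct_mulVec_le_of_hasEigenvalue_le hρ
    (w ∘ c)
  have hnorm : (w ∘ c) ⬝ᵥ (w ∘ c) = p * (3 * p - q + s) ^ 2 + q * (3 * q - p + s) ^ 2 := by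
    simp only [dotProduct, Function.comp_apply]
    rw [Fintype.sum_comp_bool c (fun i => w i * w i), hp, hq]
    simp only [w, cond_true, cond_false]
    ring
  have heig : 4 * p * (p - 1) * w true ^ 2 + p * q * (w true + w false) ^ 2
      + 4 * q * (q - 1) * w false ^ 2
      = (5 * (p + q) - 8 + s) / 2 * (p * (3 * p - q + s) ^ 2 + q * (3 * q - p + s) ^ 2) := by
    simp only [w, cond_true, cond_false]
    linear_combination (-(p * (3 * p - q + s) + q * (3 * q - p + s)) / 2) * hs2
  have hpos : 0 < p * (3 * p - q + s) ^ 2 + q * (3 * q - p + s) ^ 2 := by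
    nlinarith [mul_nonneg hp0 (sq_nonneg (3 * p - q + s - 4 * p)),
      mul_nonneg hq0 (sq_nonneg (3 * q - p + s - 4 * q))]
  rw [hnorm] at hray
  exact le_of_mul_le_mul_right (heig ▸ hquot.trans hray) hpos

end DistSignlessLaplacian

/-- Lemma 2: lower bound on the distance signless Laplacian spectral radius
of a connected bipartite graph on n vertices. -/
theorem stmt_1 {V : Type*} [Fintype V] [DecidableEq V] (G : SimpleGraph V)
    (hconn : G.Connected) (hbip : G.Colorable 2) (ρ : ℝ)
    (hρ : IsDistSLSpectralRadius G ρ) :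
    (Even (Fintype.card V) → 3 * (Fintype.card V : ℝ) - 4 ≤ ρ) ∧
    (Odd (Fintype.card V) →
      (5 * (Fintype.card V : ℝ) - 8 + Real.sqrt ((Fintype.card V : ℝ) ^ 2 + 8)) / 2 ≤ ρ) := by
  let c : G.Coloring Bool := hbip.toColoring (by simp)
  obtain ⟨p, hp⟩ : ∃ p : ℝ, #{u | c u = true} = p := ⟨_, rfl⟩
  obtain ⟨q, hq⟩ : ∃ q : ℝ, #{u | c u = false} = q := ⟨_, rfl⟩
  have hbound := distSignlessLaplacian_bipartite_bound_le hconn c hp hq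
    fun _ hμ => hρ.2 hμ
  have hcard : #{u | c u = true} + #{u | c u = false} = Fintype.card V := by
    simpa using (Fintype.sum_comp_bool c fun _ => (1 : ℕ)).symm
  have hn : (Fintype.card V : ℝ) = p + q := by
    rw [← hcard, ← hp, ← hq, Nat.cast_add]
  rw [hn]
  constructor
  · intro _
    have : p + q ≤ √((p + q) ^ 2 + 8 * (p - q) ^ 2) :=
      Real.le_sqrt_of_sq_le (by nlinarith [sq_nonneg (p - q)])
    linarith
  · intro hodd
    have hpq : #{u | c u = true} ≠ #{u | c u = false} := by
      obtain ⟨k, hk⟩ := hodd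
      omega
    have hgap : 1 ≤ (p - q) ^ 2 := by
      rw [one_le_sq_iff_one_le_abs, ← hp, ← hq]
      exact_mod_cast Int.one_le_abs (sub_ne_zero.2 (Int.ofNat_inj.not.2 hpq))
    have : √((p + q) ^ 2 + 8) ≤ √((p + q) ^ 2 + 8 * (p - q) ^ 2) :=
      Real.sqrt_le_sqrt (by linarith)
    linarith
end

section
/- Let G be a connected graph on n vertices with m edges. Then ρ_D(G) ≥ 4(n−1) − 4m/n. -/
open SimpleGraph Finset

/-!
`Q_D(G)` is symmetric, so `ρ_D(G) • 1 - Q_D(G)` is positive semidefinite and `ρ_D(G)` bounds the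
Rayleigh quotient of `Q_D(G)`. At the all-ones vector that quotient is `2 ∑ᵤ Tr(u) / n`. In a
connected graph two distinct vertices are at distance `1` if adjacent and at least `2` otherwise,
so `Tr(u) ≥ 2(n - 1) - deg u`, and summing over `u` gives `∑ᵤ Tr(u) ≥ 2n(n - 1) - 2m`.
-/

namespace Matrix

theorem IsHermitian.dotProduct_mulVec_le_mul_of_mem_upperBounds {n : Type*} [Fintype n]
    [DecidableEq n] {A : Matrix n n ℝ} (hA : A.IsHermitian) {ρ : ℝ}
    (hρ : ρ ∈ upperBounds {μ | Module.End.HasEigenvalue (toLin' A) μ}) (x : n → ℝ) :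
    x ⬝ᵥ (A *ᵥ x) ≤ ρ * (x ⬝ᵥ x) := by
  have hB : (algebraMap ℝ (Matrix n n ℝ) ρ - A).PosSemidef := by
    refine posSemidef_iff_isHermitian_and_spectrum_nonneg.mpr ⟨?_, ?_⟩
    · rw [algebraMap_eq_diagonal]
      exact (isHermitian_diagonal _).sub hA
    · rw [← spectrum.singleton_sub_eq]
      rintro _ ⟨_, rfl, μ, hμ, rfl⟩
      rw [← spectrum_toLin', ← Module.End.hasEigenvalue_iff_mem_spectrum] at hμ
      exact sub_nonneg.mpr (hρ hμ)
  have := hB.dotProduct_mulVec_nonneg x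
  simp only [star_trivial, sub_mulVec, dotProduct_sub, Algebra.algebraMap_eq_smul_one,
    smul_mulVec, one_mulVec, dotProduct_smul, smul_eq_mul] at this
  linarith

end Matrix

namespace SimpleGraph

open Matrix

variable {V : Type*} [Fintype V] (G : SimpleGraph V)

theorem isHermitian_distSignlessLaplacian [DecidableEq V] :
    (distSignlessLaplacian G).IsHermitian := by
  ext u v
  rcases eq_or_ne u v with rfl | huv
  · rfl
  · simp [distSignlessLaplacian, huv, huv.symm, dist_comm]

theorem sum_distSignlessLaplacian [DecidableEq V] (u : V) :
    ∑ v, distSignlessLaplacian G u v = 2 * transmission G u := by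
  simp only [distSignlessLaplacian, Finset.sum_add_distrib, Finset.sum_ite_eq, Finset.mem_univ,
    if_true, transmission, Nat.cast_sum]
  ring

theorem one_dotProduct_distSignlessLaplacian_mulVec_one [DecidableEq V] :
    1 ⬝ᵥ (distSignlessLaplacian G *ᵥ 1) = 2 * ∑ u, (transmission G u : ℝ) := by
  simp only [mulVec, dotProduct, Pi.one_apply, one_mul, mul_one, sum_distSignlessLaplacian,
    Finset.mul_sum]

variable {G} in
theorem Connected.two_mul_card_sub_one_le_transmission_add_degree [DecidableEq V]
    [DecidableRel G.Adj] (hG : G.Connected) (u : V) :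
    2 * (Fintype.card V - 1) ≤ transmission G u + G.degree u := by
  have hpair : ∀ v, (if u = v then 0 else 2) ≤ G.dist u v + if G.Adj u v then 1 else 0 := by
    intro v
    rcases eq_or_ne u v with rfl | huv
    · simp
    · by_cases hadj : G.Adj u v
      · simp [huv, hadj, dist_eq_one_iff_adj.mpr hadj]
      · have := hG.pos_dist_of_ne huv
        have := mt dist_eq_one_iff_adj.mp hadj
        simp only [huv, hadj, if_false]
        omega
  calc 2 * (Fintype.card V - 1) = ∑ v, if u = v then 0 else 2 := by
        rw [Finset.sum_ite, Finset.sum_const_zero, Finset.sum_const, Finset.filter_ne,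
          Finset.card_erase_of_mem (Finset.mem_univ u), Finset.card_univ]
        simp [mul_comm]
    _ ≤ ∑ v, (G.dist u v + if G.Adj u v then 1 else 0) := Finset.sum_le_sum fun v _ => hpair v
    _ = transmission G u + G.degree u := by
        rw [Finset.sum_add_distrib, Finset.sum_boole, ← card_neighborFinset_eq_degree,
          neighborFinset_eq_filter]
        rfl

end SimpleGraph

/-- ρ_D(G) ≥ 4(n-1) - 4m/n for a connected graph. -/
theorem stmt_8 {V : Type*} [Fintype V] [DecidableEq V] (G : SimpleGraph V) [DecidableRel G.Adj]
    (hconn : G.Connected) (ρ : ℝ) (hρ : IsDistSLSpectralRadius G ρ) :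
    4 * ((Fintype.card V : ℝ) - 1) - 4 * (G.edgeFinset.card : ℝ) / (Fintype.card V : ℝ) ≤ ρ := by
  have hcard : 0 < Fintype.card V := Fintype.card_pos_iff.mpr hconn.nonempty
  have hrayleigh := (isHermitian_distSignlessLaplacian G).dotProduct_mulVec_le_mul_of_mem_upperBounds
    hρ.2 1
  rw [one_dotProduct_distSignlessLaplacian_mulVec_one, one_dotProduct_one] at hrayleigh
  have htransmission : 2 * (Fintype.card V : ℝ) * (Fintype.card V - 1) ≤
      ∑ u, (transmission G u : ℝ) + 2 * G.edgeFinset.card := by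
    have := Finset.sum_le_sum fun u (_ : u ∈ Finset.univ) =>
      hconn.two_mul_card_sub_one_le_transmission_add_degree u
    rw [Finset.sum_add_distrib, sum_degrees_eq_twice_card_edges] at this
    simp only [Finset.sum_const, Finset.card_univ, smul_eq_mul] at this
    have hcast := (Nat.cast_le (α := ℝ)).mpr this
    push_cast [Nat.cast_sub hcard] at hcast
    linarith
  rw [sub_le_iff_le_add, ← sub_le_iff_le_add', le_div_iff₀ (Nat.cast_pos.mpr hcard)]
  linarith
end

section
/- Let n ≥ 6 and G = K₃ ∨ (K_{n−5} + 2K₁). Then ρ_D(G) is the largest real root of the equation ρ³ − (5n−7)ρ² + (8n² − 31n + 56)ρ − 4n³ + 26n² − 82n + 80 = 0. -/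
open SimpleGraph Finset

abbrev Gr (n : ℕ) : SimpleGraph (Fin 3 ⊕ (Fin (n - 5) ⊕ Fin 2)) :=
  joinGraph (⊤ : SimpleGraph (Fin 3)) ((⊤ : SimpleGraph (Fin (n - 5))) ⊕g (⊥ : SimpleGraph (Fin 2)))

variable {n : ℕ}

lemma adj_ll {a b : Fin 3} (h : a ≠ b) : (Gr n).Adj (.inl a) (.inl b) := by
  simp [joinGraph, SimpleGraph.fromRel_adj]; tauto

lemma adj_lr (a : Fin 3) (x : Fin (n-5) ⊕ Fin 2) : (Gr n).Adj (.inl a) (.inr x) := by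
  simp [joinGraph, SimpleGraph.fromRel_adj]

lemma adj_cc {i j : Fin (n-5)} (h : i ≠ j) : (Gr n).Adj (.inr (.inl i)) (.inr (.inl j)) := by
  simp [joinGraph, SimpleGraph.fromRel_adj]; tauto

lemma nadj_ci (i : Fin (n-5)) (k : Fin 2) : ¬ (Gr n).Adj (.inr (.inl i)) (.inr (.inr k)) := by
  simp [joinGraph, SimpleGraph.fromRel_adj]

lemma nadj_ii (k l : Fin 2) : ¬ (Gr n).Adj (.inr (.inr k)) (.inr (.inr l)) := by
  simp [joinGraph, SimpleGraph.fromRel_adj]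

lemma dist_two {V : Type*} {G : SimpleGraph V} {u v z : V} (hne : u ≠ v) (hna : ¬ G.Adj u v)
    (h1 : G.Adj u z) (h2 : G.Adj z v) : G.dist u v = 2 := by
  have hle : G.dist u v ≤ 2 := by
    have := SimpleGraph.dist_le (SimpleGraph.Walk.cons h1 (SimpleGraph.Walk.cons h2 SimpleGraph.Walk.nil))
    simpa using this
  have h0 : 0 < G.dist u v :=
    SimpleGraph.Reachable.pos_dist_of_ne
      ⟨SimpleGraph.Walk.cons h1 (SimpleGraph.Walk.cons h2 SimpleGraph.Walk.nil)⟩ hne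
  have h1' : G.dist u v ≠ 1 := fun h => hna (SimpleGraph.dist_eq_one_iff_adj.mp h)
  omega

/-- distance function -/
def dd (n : ℕ) : (Fin 3 ⊕ (Fin (n-5) ⊕ Fin 2)) → (Fin 3 ⊕ (Fin (n-5) ⊕ Fin 2)) → ℕ
  | .inl a, .inl b => if a = b then 0 else 1
  | .inl _, .inr _ => 1
  | .inr _, .inl _ => 1
  | .inr (.inl i), .inr (.inl j) => if i = j then 0 else 1
  | .inr (.inl _), .inr (.inr _) => 2
  | .inr (.inr _), .inr (.inl _) => 2
  | .inr (.inr k), .inr (.inr l) => if k = l then 0 else 2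

lemma dist_eq (u v : Fin 3 ⊕ (Fin (n-5) ⊕ Fin 2)) : (Gr n).dist u v = dd n u v := by
  obtain (a | i | k) := u <;> obtain (b | j | l) := v <;> simp only [dd]
  · by_cases h : a = b
    · subst h; simp
    · rw [if_neg h]; exact SimpleGraph.dist_eq_one_iff_adj.mpr (adj_ll h)
  · exact SimpleGraph.dist_eq_one_iff_adj.mpr (adj_lr a _)
  · exact SimpleGraph.dist_eq_one_iff_adj.mpr (adj_lr a _)
  · exact SimpleGraph.dist_eq_one_iff_adj.mpr ((adj_lr b _).symm)
  · by_cases h : i = j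
    · subst h; simp
    · rw [if_neg h]; exact SimpleGraph.dist_eq_one_iff_adj.mpr (adj_cc h)
  · exact dist_two (by simp) (nadj_ci i l) ((adj_lr 0 _).symm) (adj_lr 0 _)
  · exact SimpleGraph.dist_eq_one_iff_adj.mpr ((adj_lr b _).symm)
  · exact dist_two (by simp) (fun h => nadj_ci j k h.symm) ((adj_lr 0 _).symm) (adj_lr 0 _)
  · by_cases h : k = l
    · subst h; simp
    · rw [if_neg h]
      exact dist_two (by simp [h]) (nadj_ii k l) ((adj_lr 0 _).symm) (adj_lr 0 _)

lemma sum_ite_ne {α : Type*} [Fintype α] [DecidableEq α] (a : α) (c : ℕ) :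
    ∑ b : α, (if a = b then 0 else c) = (Fintype.card α - 1) * c := by
  classical
  rw [← Finset.add_sum_erase _ _ (Finset.mem_univ a), if_pos rfl, zero_add,
    Finset.sum_congr rfl (fun b hb => if_neg (fun h => (Finset.mem_erase.mp hb).1 h.symm)),
    Finset.sum_const, Finset.card_erase_of_mem (Finset.mem_univ a), Finset.card_univ,
    smul_eq_mul]

lemma trans_l (hn : 6 ≤ n) (a : Fin 3) : transmission (Gr n) (.inl a) = n - 1 := by
  unfold transmission
  simp only [dist_eq]
  rw [Fintype.sum_sum_type, Fintype.sum_sum_type]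
  simp only [dd]
  rw [sum_ite_ne a 1]
  simp only [Finset.sum_const, Finset.card_univ, Fintype.card_fin, smul_eq_mul, mul_one]
  omega

lemma trans_c (hn : 6 ≤ n) (i : Fin (n-5)) : transmission (Gr n) (.inr (.inl i)) = n + 1 := by
  unfold transmission
  simp only [dist_eq]
  rw [Fintype.sum_sum_type, Fintype.sum_sum_type]
  simp only [dd]
  rw [sum_ite_ne i 1]
  simp only [Finset.sum_const, Finset.card_univ, Fintype.card_fin, smul_eq_mul, mul_one]
  omega

lemma trans_i (hn : 6 ≤ n) (k : Fin 2) : transmission (Gr n) (.inr (.inr k)) = 2 * n - 5 := by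
  unfold transmission
  simp only [dist_eq]
  rw [Fintype.sum_sum_type, Fintype.sum_sum_type]
  simp only [dd]
  rw [sum_ite_ne k 2]
  simp only [Finset.sum_const, Finset.card_univ, Fintype.card_fin, smul_eq_mul, mul_one]
  omega

lemma sum_ite_row {α : Type*} [Fintype α] [DecidableEq α] (a : α) (c d : ℝ) (w : α → ℝ) :
    ∑ b : α, (if a = b then c else d) * w b = (c - d) * w a + d * ∑ b, w b := by
  have h : ∀ b, (if a = b then c else d) * w b
      = (if a = b then (c - d) * w b else 0) + d * w b := by
    intro b; by_cases h : a = b <;> simp [h] <;> ring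
  simp only [h, Finset.sum_add_distrib, Finset.sum_ite_eq, Finset.mem_univ, if_true,
    ← Finset.mul_sum]

variable (w : (Fin 3 ⊕ (Fin (n-5) ⊕ Fin 2)) → ℝ)

lemma row_l (hn : 6 ≤ n) (a : Fin 3) :
    ((distSignlessLaplacian (Gr n)).mulVec w) (.inl a)
      = ((n:ℝ) - 2) * w (.inl a) + (∑ b, w (.inl b)) + (∑ j, w (.inr (.inl j)))
        + (∑ k, w (.inr (.inr k))) := by
  have h5 : (5:ℕ) ≤ n := by omega
  simp only [Matrix.mulVec, dotProduct, distSignlessLaplacian]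
  rw [Fintype.sum_sum_type, Fintype.sum_sum_type]
  simp only [dist_eq, dd, trans_l hn, Sum.inl.injEq, reduceCtorEq, if_false, zero_add,
    Nat.cast_ite, Nat.cast_zero, Nat.cast_one, Nat.cast_ofNat]
  have e1 : ∀ b : Fin 3, ((if a = b then ((n - 1 : ℕ) : ℝ) else 0) + if a = b then (0:ℝ) else 1)
      = if a = b then ((n:ℝ) - 1) else 1 := by
    intro b; by_cases h : a = b <;> simp [h, Nat.cast_sub (show 1 ≤ n by omega)]
  simp only [e1, sum_ite_row, one_mul]
  ring

lemma row_c (hn : 6 ≤ n) (i : Fin (n-5)) :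
    ((distSignlessLaplacian (Gr n)).mulVec w) (.inr (.inl i))
      = (n:ℝ) * w (.inr (.inl i)) + (∑ b, w (.inl b)) + (∑ j, w (.inr (.inl j)))
        + 2 * (∑ k, w (.inr (.inr k))) := by
  simp only [Matrix.mulVec, dotProduct, distSignlessLaplacian]
  rw [Fintype.sum_sum_type, Fintype.sum_sum_type]
  simp only [dist_eq, dd, trans_c hn, Sum.inl.injEq, Sum.inr.injEq, reduceCtorEq, if_false,
    zero_add, Nat.cast_ite, Nat.cast_zero, Nat.cast_one, Nat.cast_ofNat]
  have e1 : ∀ j : Fin (n-5),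
      ((if i = j then ((n + 1 : ℕ) : ℝ) else 0) + if i = j then (0:ℝ) else 1)
      = if i = j then ((n:ℝ) + 1) else 1 := by
    intro j; by_cases h : i = j <;> simp [h]
  simp only [e1, sum_ite_row, one_mul, ← Finset.mul_sum]
  push_cast
  ring

lemma row_i (hn : 6 ≤ n) (k : Fin 2) :
    ((distSignlessLaplacian (Gr n)).mulVec w) (.inr (.inr k))
      = (2*(n:ℝ) - 7) * w (.inr (.inr k)) + (∑ b, w (.inl b)) + 2 * (∑ j, w (.inr (.inl j)))
        + 2 * (∑ l, w (.inr (.inr l))) := by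
  simp only [Matrix.mulVec, dotProduct, distSignlessLaplacian]
  rw [Fintype.sum_sum_type, Fintype.sum_sum_type]
  simp only [dist_eq, dd, trans_i hn, Sum.inl.injEq, Sum.inr.injEq, reduceCtorEq, if_false,
    zero_add, Nat.cast_ite, Nat.cast_zero, Nat.cast_one, Nat.cast_ofNat]
  have e1 : ∀ l : Fin 2,
      ((if k = l then ((2*n - 5 : ℕ) : ℝ) else 0) + if k = l then (0:ℝ) else 2)
      = if k = l then (2*(n:ℝ) - 5) else 2 := by
    intro l; by_cases h : k = l <;>
      simp [h, Nat.cast_sub (show 5 ≤ 2*n by omega)] <;> push_cast <;> ring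
  simp only [e1, sum_ite_row, one_mul, ← Finset.mul_sum]
  ring

lemma root_is_eigenvalue (hn : 6 ≤ n) (x : ℝ)
    (hx : x ^ 3 - (5 * (n : ℝ) - 7) * x ^ 2 + (8 * (n : ℝ) ^ 2 - 31 * (n : ℝ) + 56) * x -
      4 * (n : ℝ) ^ 3 + 26 * (n : ℝ) ^ 2 - 82 * (n : ℝ) + 80 = 0) :
    Module.End.HasEigenvalue (Matrix.toLin' (distSignlessLaplacian (Gr n))) x := by
  have hc : ((n - 5 : ℕ) : ℝ) = (n : ℝ) - 5 := by
    rw [Nat.cast_sub (by omega)]; norm_num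
  set A : Matrix (Fin 3) (Fin 3) ℝ :=
    !![x - ((n:ℝ)+1), -((n:ℝ)-5), -2; -3, x - (2*(n:ℝ)-5), -4;
       -3, -(2*(n:ℝ)-10), x - (2*(n:ℝ)-3)] with hA
  have hdet : A.det = 0 := by
    have h := Matrix.det_fin_three A
    have e00 : A 0 0 = x - ((n:ℝ)+1) := rfl
    have e01 : A 0 1 = -((n:ℝ)-5) := rfl
    have e02 : A 0 2 = -2 := rfl
    have e10 : A 1 0 = -3 := rfl
    have e11 : A 1 1 = x - (2*(n:ℝ)-5) := rfl
    have e12 : A 1 2 = -4 := rfl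
    have e20 : A 2 0 = -3 := rfl
    have e21 : A 2 1 = -(2*(n:ℝ)-10) := rfl
    have e22 : A 2 2 = x - (2*(n:ℝ)-3) := rfl
    rw [e00, e01, e02, e10, e11, e12, e20, e21, e22] at h
    rw [h]
    linear_combination hx
  obtain ⟨v, hv0, hv⟩ := Matrix.exists_mulVec_eq_zero_iff.mpr hdet
  have h0 := congrFun hv 0
  have h1 := congrFun hv 1
  have h2 := congrFun hv 2
  simp [hA, Matrix.mulVec, dotProduct, Fin.sum_univ_three] at h0 h1 h2
  set wv : (Fin 3 ⊕ (Fin (n-5) ⊕ Fin 2)) → ℝ :=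
    Sum.elim (fun _ => v 0) (Sum.elim (fun _ => v 1) (fun _ => v 2)) with hwv
  have hS0 : (∑ b : Fin 3, wv (.inl b)) = 3 * v 0 := by
    simp [hwv, Finset.sum_const]
  have hS1 : (∑ j : Fin (n-5), wv (.inr (.inl j))) = ((n:ℝ) - 5) * v 1 := by
    simp [hwv, Finset.sum_const, hc]
  have hS2 : (∑ k : Fin 2, wv (.inr (.inr k))) = 2 * v 2 := by
    simp [hwv, Finset.sum_const]
  have hmain : (distSignlessLaplacian (Gr n)).mulVec wv = x • wv := by
    funext u
    obtain (a | i | k) := u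
    · rw [row_l wv hn a, hS0, hS1, hS2]
      simp only [hwv, Sum.elim_inl, Pi.smul_apply, smul_eq_mul]
      linear_combination -h0
    · rw [row_c wv hn i, hS0, hS1, hS2]
      simp only [hwv, Sum.elim_inr, Sum.elim_inl, Pi.smul_apply, smul_eq_mul]
      linear_combination -h1
    · rw [row_i wv hn k, hS0, hS1, hS2]
      simp only [hwv, Sum.elim_inr, Pi.smul_apply, smul_eq_mul]
      linear_combination -h2
  have hwne : wv ≠ 0 := by
    intro hz
    apply hv0
    funext i
    have e0 : wv (.inl 0) = 0 := by rw [hz]; rfl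
    have e1 : wv (.inr (.inl ⟨0, by omega⟩)) = 0 := by rw [hz]; rfl
    have e2 : wv (.inr (.inr 0)) = 0 := by rw [hz]; rfl
    simp only [hwv, Sum.elim_inl, Sum.elim_inr] at e0 e1 e2
    fin_cases i <;> simpa
  exact Module.End.hasEigenvalue_of_hasEigenvector
    ⟨Module.End.mem_eigenspace_iff.mpr (by rw [Matrix.toLin'_apply]; exact hmain), hwne⟩

lemma rho_is_root (hn : 6 ≤ n) (ρ : ℝ)
    (hρ : IsGreatest {μ : ℝ | Module.End.HasEigenvalue
      (Matrix.toLin' (distSignlessLaplacian (Gr n))) μ} ρ)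
    (hρbig : 2*(n:ℝ) - 6 < ρ) :
    ρ ^ 3 - (5 * (n : ℝ) - 7) * ρ ^ 2 + (8 * (n : ℝ) ^ 2 - 31 * (n : ℝ) + 56) * ρ -
      4 * (n : ℝ) ^ 3 + 26 * (n : ℝ) ^ 2 - 82 * (n : ℝ) + 80 = 0 := by
  have hn6 : (6:ℝ) ≤ (n:ℝ) := by exact_mod_cast hn
  have hc : ((n - 5 : ℕ) : ℝ) = (n : ℝ) - 5 := by
    rw [Nat.cast_sub (by omega)]; norm_num
  obtain ⟨w, hw⟩ := hρ.1.exists_hasEigenvector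
  have hmv : (distSignlessLaplacian (Gr n)).mulVec w = ρ • w := by
    have h := Module.End.mem_eigenspace_iff.mp hw.1
    rwa [Matrix.toLin'_apply] at h
  set s0 := ∑ b : Fin 3, w (Sum.inl b) with hs0
  set s1 := ∑ j : Fin (n-5), w (Sum.inr (Sum.inl j)) with hs1
  set s2 := ∑ k : Fin 2, w (Sum.inr (Sum.inr k)) with hs2
  have E0 : ∀ a : Fin 3, ρ * w (.inl a) = ((n:ℝ)-2) * w (.inl a) + s0 + s1 + s2 := by
    intro a
    have h := congrFun hmv (Sum.inl a)
    rw [row_l w hn a, Pi.smul_apply, smul_eq_mul, ← hs0, ← hs1, ← hs2] at h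
    linarith
  have E1 : ∀ i : Fin (n-5), ρ * w (.inr (.inl i))
      = (n:ℝ) * w (.inr (.inl i)) + s0 + s1 + 2*s2 := by
    intro i
    have h := congrFun hmv (Sum.inr (Sum.inl i))
    rw [row_c w hn i, Pi.smul_apply, smul_eq_mul, ← hs0, ← hs1, ← hs2] at h
    linarith
  have E2 : ∀ k : Fin 2, ρ * w (.inr (.inr k))
      = (2*(n:ℝ)-7) * w (.inr (.inr k)) + s0 + 2*s1 + 2*s2 := by
    intro k
    have h := congrFun hmv (Sum.inr (Sum.inr k))
    rw [row_i w hn k, Pi.smul_apply, smul_eq_mul, ← hs0, ← hs1, ← hs2] at h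
    linarith
  have F0 : ρ * s0 = ((n:ℝ)+1) * s0 + 3*s1 + 3*s2 := by
    have h := Finset.sum_congr rfl (fun (a : Fin 3) (_ : a ∈ Finset.univ) => E0 a)
    simp only [Finset.sum_add_distrib, Finset.sum_const, Finset.card_univ, Fintype.card_fin,
      nsmul_eq_mul, ← Finset.mul_sum] at h
    rw [← hs0] at h
    push_cast at h
    linarith
  have F1 : ρ * s1 = (n:ℝ) * s1 + ((n:ℝ)-5) * (s0 + s1 + 2*s2) := by
    have h := Finset.sum_congr rfl (fun (i : Fin (n-5)) (_ : i ∈ Finset.univ) => E1 i)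
    simp only [Finset.sum_add_distrib, Finset.sum_const, Finset.card_univ, Fintype.card_fin,
      nsmul_eq_mul, ← Finset.mul_sum] at h
    rw [← hs1, hc] at h
    linarith
  have F2 : ρ * s2 = (2*(n:ℝ)-7) * s2 + 2 * (s0 + 2*s1 + 2*s2) := by
    have h := Finset.sum_congr rfl (fun (k : Fin 2) (_ : k ∈ Finset.univ) => E2 k)
    simp only [Finset.sum_add_distrib, Finset.sum_const, Finset.card_univ, Fintype.card_fin,
      nsmul_eq_mul, ← Finset.mul_sum] at h
    rw [← hs2] at h
    push_cast at h
    linarith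
  by_cases hz : s0 = 0 ∧ s1 = 0 ∧ s2 = 0
  · exfalso
    obtain ⟨z0, z1, z2⟩ := hz
    apply hw.2
    have hρ1 : ρ - ((n:ℝ) - 2) ≠ 0 := by intro h; nlinarith
    have hρ2 : ρ - (n:ℝ) ≠ 0 := by intro h; nlinarith
    have hρ3 : ρ - (2*(n:ℝ) - 7) ≠ 0 := by intro h; nlinarith
    funext u
    obtain (a | i | k) := u
    · have h := E0 a; rw [z0, z1, z2] at h
      have h' : (ρ - ((n:ℝ)-2)) * w (.inl a) = 0 := by linarith
      simpa using (mul_eq_zero.mp h').resolve_left hρ1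
    · have h := E1 i; rw [z0, z1, z2] at h
      have h' : (ρ - (n:ℝ)) * w (.inr (.inl i)) = 0 := by linarith
      simpa using (mul_eq_zero.mp h').resolve_left hρ2
    · have h := E2 k; rw [z0, z1, z2] at h
      have h' : (ρ - (2*(n:ℝ)-7)) * w (.inr (.inr k)) = 0 := by linarith
      simpa using (mul_eq_zero.mp h').resolve_left hρ3
  · set B : Matrix (Fin 3) (Fin 3) ℝ :=
      !![ρ - ((n:ℝ)+1), -3, -3;
         -((n:ℝ)-5), ρ-(2*(n:ℝ)-5), -(2*(n:ℝ)-10);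
         -2, -4, ρ-(2*(n:ℝ)-3)] with hB
    have hsv : B.mulVec ![s0, s1, s2] = 0 := by
      funext i
      fin_cases i
      · show B 0 0 * s0 + (B 0 1 * s1 + (B 0 2 * s2 + 0)) = 0
        have e0 : B 0 0 = ρ - ((n:ℝ)+1) := rfl
        have e1 : B 0 1 = -3 := rfl
        have e2 : B 0 2 = -3 := rfl
        rw [e0, e1, e2]; linear_combination F0
      · show B 1 0 * s0 + (B 1 1 * s1 + (B 1 2 * s2 + 0)) = 0
        have e0 : B 1 0 = -((n:ℝ)-5) := rfl
        have e1 : B 1 1 = ρ-(2*(n:ℝ)-5) := rfl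
        have e2 : B 1 2 = -(2*(n:ℝ)-10) := rfl
        rw [e0, e1, e2]; linear_combination F1
      · show B 2 0 * s0 + (B 2 1 * s1 + (B 2 2 * s2 + 0)) = 0
        have e0 : B 2 0 = -2 := rfl
        have e1 : B 2 1 = -4 := rfl
        have e2 : B 2 2 = ρ-(2*(n:ℝ)-3) := rfl
        rw [e0, e1, e2]; linear_combination F2
    have hsvne : ![s0, s1, s2] ≠ 0 := by
      intro h
      apply hz
      refine ⟨?_, ?_, ?_⟩
      · simpa using congrFun h 0
      · simpa using congrFun h 1
      · simpa using congrFun h 2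
    have hdet : B.det = 0 := Matrix.exists_mulVec_eq_zero_iff.mp ⟨_, hsvne, hsv⟩
    have hd := Matrix.det_fin_three B
    have e00 : B 0 0 = ρ - ((n:ℝ)+1) := rfl
    have e01 : B 0 1 = -3 := rfl
    have e02 : B 0 2 = -3 := rfl
    have e10 : B 1 0 = -((n:ℝ)-5) := rfl
    have e11 : B 1 1 = ρ-(2*(n:ℝ)-5) := rfl
    have e12 : B 1 2 = -(2*(n:ℝ)-10) := rfl
    have e20 : B 2 0 = -2 := rfl
    have e21 : B 2 1 = -4 := rfl
    have e22 : B 2 2 = ρ-(2*(n:ℝ)-3) := rfl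
    rw [hdet, e00, e01, e02, e10, e11, e12, e20, e21, e22] at hd
    linear_combination -hd

/-- For G = K₃ ∨ (K_{n-5} + 2K₁), ρ_D(G) is the largest root of the given cubic. -/
theorem stmt_9 (n : ℕ) (hn : 6 ≤ n) (ρ : ℝ)
    (hρ : IsDistSLSpectralRadius (joinGraph (⊤ : SimpleGraph (Fin 3))
      ((⊤ : SimpleGraph (Fin (n - 5))) ⊕g (⊥ : SimpleGraph (Fin 2)))) ρ) :
    IsGreatest {x : ℝ | x ^ 3 - (5 * (n : ℝ) - 7) * x ^ 2 +
      (8 * (n : ℝ) ^ 2 - 31 * (n : ℝ) + 56) * x -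
      4 * (n : ℝ) ^ 3 + 26 * (n : ℝ) ^ 2 - 82 * (n : ℝ) + 80 = 0} ρ := by
  have hρ' : IsGreatest {μ : ℝ | Module.End.HasEigenvalue
      (Matrix.toLin' (distSignlessLaplacian (Gr n))) μ} ρ := hρ
  have hn6 : (6:ℝ) ≤ (n:ℝ) := by exact_mod_cast hn
  set P : ℝ → ℝ := fun x => x ^ 3 - (5 * (n : ℝ) - 7) * x ^ 2 +
      (8 * (n : ℝ) ^ 2 - 31 * (n : ℝ) + 56) * x -
      4 * (n : ℝ) ^ 3 + 26 * (n : ℝ) ^ 2 - 82 * (n : ℝ) + 80 with hP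
  have hPa : P (2*(n:ℝ) - 6) < 0 := by
    rw [hP]
    simp only
    have h1 : (1:ℝ) ≤ (n:ℝ) - 5 := by linarith
    have h2 : (1:ℝ) ≤ 2*(n:ℝ) - 11 := by linarith
    nlinarith [mul_le_mul h2 h1 (by linarith) (by linarith)]
  have hPb : 0 ≤ P (5*(n:ℝ)) := by
    rw [hP]; simp only; nlinarith [sq_nonneg (n:ℝ), pow_pos (show (0:ℝ) < n by linarith) 3]
  have hab : 2*(n:ℝ) - 6 ≤ 5*(n:ℝ) := by linarith
  have hcont : ContinuousOn P (Set.Icc (2*(n:ℝ)-6) (5*(n:ℝ))) := by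
    apply Continuous.continuousOn
    rw [hP]
    continuity
  obtain ⟨r0, hr0mem, hr0⟩ :=
    intermediate_value_Icc hab hcont ⟨le_of_lt hPa, hPb⟩
  have hr0gt : 2*(n:ℝ) - 6 < r0 := by
    rcases lt_or_eq_of_le hr0mem.1 with h | h
    · exact h
    · exfalso; rw [← h] at hr0; rw [hr0] at hPa; exact lt_irrefl 0 hPa
  have hρ0 : r0 ≤ ρ := hρ'.2 (root_is_eigenvalue hn r0 (by rw [hP] at hr0; exact hr0))
  have hρbig : 2*(n:ℝ) - 6 < ρ := lt_of_lt_of_le hr0gt hρ0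
  constructor
  · exact rho_is_root hn ρ hρ' hρbig
  · intro x hx
    exact hρ'.2 (root_is_eigenvalue hn x hx)
end

section
/- For every real number n ≥ 5, the polynomial f(x) = x³ − (5n−7)x² + (8n² − 31n + 56)x − 4n³ + 26n² − 82n + 80 satisfies f((2n² + 6n − 36)/n) = −8(n⁵ − 6n⁴ − 70n³ + 954n² − 4050n + 5832)/n³ < 0, and (2n² + 6n − 36)/n > (5n − 7 + √(n² + 23n − 119))/3. -/
open SimpleGraph Finset

/-- Real-polynomial computation used in the proof of Theorem 6. -/
theorem stmt_11 (n : ℝ) (hn : 5 ≤ n) :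
    (((2 * n ^ 2 + 6 * n - 36) / n) ^ 3 -
        (5 * n - 7) * ((2 * n ^ 2 + 6 * n - 36) / n) ^ 2 +
        (8 * n ^ 2 - 31 * n + 56) * ((2 * n ^ 2 + 6 * n - 36) / n) -
        4 * n ^ 3 + 26 * n ^ 2 - 82 * n + 80 =
      -8 * (n ^ 5 - 6 * n ^ 4 - 70 * n ^ 3 + 954 * n ^ 2 - 4050 * n + 5832) / n ^ 3) ∧
    (((2 * n ^ 2 + 6 * n - 36) / n) ^ 3 -
        (5 * n - 7) * ((2 * n ^ 2 + 6 * n - 36) / n) ^ 2 +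
        (8 * n ^ 2 - 31 * n + 56) * ((2 * n ^ 2 + 6 * n - 36) / n) -
        4 * n ^ 3 + 26 * n ^ 2 - 82 * n + 80 < 0) ∧
    (5 * n - 7 + Real.sqrt (n ^ 2 + 23 * n - 119)) / 3 < (2 * n ^ 2 + 6 * n - 36) / n := by
  have hn0 : (0:ℝ) < n := by linarith
  have hne : n ≠ 0 := ne_of_gt hn0
  have h1 : (((2 * n ^ 2 + 6 * n - 36) / n) ^ 3 -
        (5 * n - 7) * ((2 * n ^ 2 + 6 * n - 36) / n) ^ 2 +
        (8 * n ^ 2 - 31 * n + 56) * ((2 * n ^ 2 + 6 * n - 36) / n) -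
        4 * n ^ 3 + 26 * n ^ 2 - 82 * n + 80 =
      -8 * (n ^ 5 - 6 * n ^ 4 - 70 * n ^ 3 + 954 * n ^ 2 - 4050 * n + 5832) / n ^ 3) := by
    field_simp
    ring
  refine ⟨h1, ?_, ?_⟩
  · rw [h1]
    have hp : 0 < n ^ 5 - 6 * n ^ 4 - 70 * n ^ 3 + 954 * n ^ 2 - 4050 * n + 5832 := by
      nlinarith [sq_nonneg (n-5), sq_nonneg (n-9), sq_nonneg ((n-5)*(n-9)), sq_nonneg (n*(n-9)), pow_pos hn0 3, sq_nonneg (n^2 - 14*n + 33), sq_nonneg (n*(n-5)), mul_nonneg (mul_nonneg (by linarith : (0:ℝ) ≤ n-5) (by linarith : (0:ℝ) ≤ n-5)) (sq_nonneg (n-9))]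
    rw [div_lt_iff₀ (pow_pos hn0 3)]
    nlinarith [pow_pos hn0 3]
  · have hy : (0:ℝ) < (n ^ 2 + 25 * n - 108) / n := by
      apply div_pos _ hn0; nlinarith
    have hs : Real.sqrt (n ^ 2 + 23 * n - 119) < (n ^ 2 + 25 * n - 108) / n := by
      rw [Real.sqrt_lt' hy, div_pow, lt_div_iff₀ (by positivity : (0:ℝ) < n ^ 2)]
      nlinarith [sq_nonneg n, mul_pos hn0 hn0]
    rw [lt_div_iff₀ hn0] at hs
    rw [div_lt_div_iff₀ (by norm_num) hn0]
    nlinarith [hs]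
end
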